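/- Let G be a connected signed graph with Gremban expansion 𝒢, and define the symmetric edge connectivity κ_e^sym(𝒢) as the minimum size of a Gremban-symmetric cut-set of 𝒢. Then κ_e^sym(𝒢) = 2·min{κ_e(G), φ(G)}, where κ_e(G) is the edge connectivity and φ(G) the frustration index of G. -/

import Mathlib

/-- A signed graph: a simple graph together with a symmetric `±1`-valued sign function
on its edges. -/
structure SignedGraph (V : Type*) where
  G : SimpleGraph V
  sign : V → V → ℤ
  sign_symm : ∀ u v, sign u v = sign v u
  sign_pm : ∀ u v, G.Adj u v → sign u v = 1 ∨ sign u v = -1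

namespace SignedGraph

variable {V : Type*} (S : SignedGraph V)

/-- The Gremban expansion of a signed graph: each vertex `v` is doubled into the two
polarities `(v, true)` (positive) and `(v, false)` (negative); a positive edge lifts to
two edges between equal polarities, and a negative edge to two edges between opposite
polarities. -/
def gremban : SimpleGraph (V × Bool) where
  Adj x y := S.G.Adj x.1 y.1 ∧ ((x.2 = y.2) ↔ S.sign x.1 y.1 = 1)
  symm := by
    constructor
    rintro ⟨u, a⟩ ⟨v, b⟩ ⟨h, hs⟩
    refine ⟨h.symm, ?_⟩
    rw [S.sign_symm v u, eq_comm]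
    exact hs
  loopless := by
    constructor
    rintro ⟨u, a⟩ ⟨h, _⟩
    exact S.G.loopless.irrefl u h

/-- The Gremban involution, swapping the two polarities of every vertex. -/
def eta : V × Bool → V × Bool := fun x => (x.1, !x.2)

end SignedGraph

open SignedGraph

/-- The set of edges of `G` with one endpoint in `A` and the other in `B`. -/
def cutEdges {V : Type*} (G : SimpleGraph V) (A B : Set V) : Set (Sym2 V) :=
  {e | e ∈ G.edgeSet ∧ ∃ u v, e = s(u, v) ∧ u ∈ A ∧ v ∈ B}

/-- The edge connectivity of a graph: the minimum size of a cut-set over all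
bipartitions of the vertex set into two nonempty parts. -/
noncomputable def edgeConn {V : Type*} (G : SimpleGraph V) : ℕ :=
  sInf {n | ∃ A : Set V, A.Nonempty ∧ Aᶜ.Nonempty ∧ (cutEdges G A Aᶜ).ncard = n}

/-- The frustration set of a switching function `θ`: the edges that are negative after
switching by `θ`. -/
def frustEdges {V : Type*} (S : SignedGraph V) (θ : V → ℤ) : Set (Sym2 V) :=
  {e | e ∈ S.G.edgeSet ∧ ∃ u v, e = s(u, v) ∧ θ u * θ v * S.sign u v = -1}

/-- The frustration index of a signed graph: the minimum size of a frustration set over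
all switching functions `θ : V → {±1}`. -/
noncomputable def frustIndex {V : Type*} (S : SignedGraph V) : ℕ :=
  sInf {n | ∃ θ : V → ℤ, (∀ v, θ v = 1 ∨ θ v = -1) ∧ (frustEdges S θ).ncard = n}

/-- A Gremban-symmetric bipartition of the vertex set of the Gremban expansion: two
nonempty, disjoint, covering parts, each mapped onto a part by the Gremban involution. -/
def GrembanSymPartition {V : Type*} (U₁ U₂ : Set (V × Bool)) : Prop :=
  U₁.Nonempty ∧ U₂.Nonempty ∧ Disjoint U₁ U₂ ∧ U₁ ∪ U₂ = Set.univ ∧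
    ((eta '' U₁ = U₁ ∧ eta '' U₂ = U₂) ∨ (eta '' U₁ = U₂ ∧ eta '' U₂ = U₁))

/-- `F` is a cut-set of the signed graph `G`: the set of edges between the two parts of
some bipartition of `V(G)` into nonempty parts. -/
def IsCutSet {V : Type*} (S : SignedGraph V) (F : Set (Sym2 V)) : Prop :=
  ∃ A : Set V, A.Nonempty ∧ Aᶜ.Nonempty ∧ F = cutEdges S.G A Aᶜ

/-- `F` is a frustration set of the signed graph `G`: the set of edges that become
negative after some switching. -/
def IsFrustSet {V : Type*} (S : SignedGraph V) (F : Set (Sym2 V)) : Prop :=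
  ∃ θ : V → ℤ, (∀ v, θ v = 1 ∨ θ v = -1) ∧ F = frustEdges S θ

/-- The collection of Gremban-symmetric cut-sets of the Gremban expansion, i.e. cut-sets
of Gremban-symmetric bipartitions. -/
def symCutSets {V : Type*} (S : SignedGraph V) : Set (Set (Sym2 (V × Bool))) :=
  {C | ∃ U₁ U₂ : Set (V × Bool), GrembanSymPartition U₁ U₂ ∧
    C = cutEdges S.gremban U₁ U₂}


/-- The symmetric edge connectivity of the Gremban expansion: the minimum size of a
Gremban-symmetric cut-set. -/
noncomputable def symEdgeConn {V : Type*} (S : SignedGraph V) : ℕ :=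
  sInf {n | ∃ C ∈ symCutSets S, C.ncard = n}

/-!
A bipartition `{U, Uᶜ}` of `V × Bool` is Gremban-symmetric exactly when `η` either fixes `U` or
swaps it with `Uᶜ`. In the first case `U = A × Bool` for a vertex set `A` of `G`; in the second
`U` is the section `{(v, θ v)}` of a switching `θ`. The projection `V × Bool → V` maps the
Gremban cut of `U` two-to-one onto the cut of `A`, respectively onto the frustration set of `θ`:
its fibres are the `η`-orbits `{e, η e}`, because over an edge `uv` of `G` a lift is determined
by the polarity of `u`. So the sizes of symmetric cut-sets are exactly twice the sizes of the
cut-sets and frustration sets of `G`.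
-/

theorem Set.ncard_eq_two_mul_ncard_image {α β : Type*} {s : Set α} (hs : s.Finite)
    (f : α → β) (ι : α → α) (hmaps : ∀ x ∈ s, ι x ∈ s) (hne : ∀ x ∈ s, ι x ≠ x)
    (hf : ∀ x ∈ s, f (ι x) = f x) (hfiber : ∀ x ∈ s, ∀ y ∈ s, f y = f x → y = x ∨ y = ι x) :
    s.ncard = 2 * (f '' s).ncard := by
  classical
  obtain ⟨t, rfl⟩ := hs.exists_finset_coe
  rw [← Finset.coe_image, Set.ncard_coe_finset, Set.ncard_coe_finset,
    Finset.card_eq_sum_card_image f t, Finset.sum_const_nat, mul_comm]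
  simp only [Finset.mem_image, forall_exists_index, and_imp, forall_apply_eq_imp_iff₂]
  intro x hx
  have hpair : {y ∈ t | f y = f x} = {x, ι x} := by
    ext y
    simp only [Finset.mem_filter, Finset.mem_insert, Finset.mem_singleton]
    constructor
    · exact fun ⟨hy, hxy⟩ => hfiber x hx y hy hxy
    · rintro (rfl | rfl)
      exacts [⟨hx, rfl⟩, ⟨hmaps x hx, hf x hx⟩]
  rw [hpair, Finset.card_pair (hne x hx).symm]

theorem Int.mul_mul_eq_neg_one_iff {x y z : ℤ} (hx : x = 1 ∨ x = -1) (hy : y = 1 ∨ y = -1)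
    (hz : z = 1 ∨ z = -1) : x * y * z = -1 ↔ ((x = 1 ↔ y = 1) ↔ z ≠ 1) := by
  rcases hx with rfl | rfl <;> rcases hy with rfl | rfl <;> rcases hz with rfl | rfl <;> decide

def cutSizes {V : Type*} (G : SimpleGraph V) : Set ℕ :=
  {n | ∃ A : Set V, A.Nonempty ∧ Aᶜ.Nonempty ∧ (cutEdges G A Aᶜ).ncard = n}

def frustSizes {V : Type*} (S : SignedGraph V) : Set ℕ :=
  {n | ∃ θ : V → ℤ, (∀ v, θ v = 1 ∨ θ v = -1) ∧ (frustEdges S θ).ncard = n}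

namespace SignedGraph

variable {V : Type*} {S : SignedGraph V}

theorem eta_involutive : Function.Involutive (eta : V × Bool → V × Bool) := fun x => by
  simp [eta]

theorem image_eta (U : Set (V × Bool)) : eta '' U = eta ⁻¹' U :=
  congrFun (Set.image_eq_preimage_of_inverse eta_involutive.leftInverse
    eta_involutive.rightInverse) U

/-- The section `v ↦ (v, θ v)` of the Gremban expansion, reading `θ v = 1` as the positive
polarity `true`. -/
def switchingSet (θ : V → ℤ) : Set (V × Bool) := {x | x.2 = true ↔ θ x.1 = 1}

theorem preimage_eta_eq_self_iff {U : Set (V × Bool)} :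
    eta ⁻¹' U = U ↔ ∃ A : Set V, U = Prod.fst ⁻¹' A := by
  constructor
  · intro hU
    refine ⟨{v | (v, true) ∈ U}, Set.ext fun ⟨v, b⟩ => ?_⟩
    cases b
    · exact (Set.ext_iff.1 hU (v, false)).symm
    · rfl
  · rintro ⟨A, rfl⟩
    rfl

theorem preimage_eta_eq_compl_iff {U : Set (V × Bool)} :
    eta ⁻¹' U = Uᶜ ↔ ∃ θ : V → ℤ, (∀ v, θ v = 1 ∨ θ v = -1) ∧ U = switchingSet θ := by
  constructor
  · classical
    intro hU
    refine ⟨fun v => if (v, true) ∈ U then 1 else -1, fun _ => ite_eq_or_eq _ _ _,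
      Set.ext fun ⟨v, b⟩ => ?_⟩
    have h := Set.ext_iff.1 hU (v, false)
    simp only [Set.mem_preimage, eta, Bool.not_false, Set.mem_compl_iff] at h
    cases b <;> by_cases hv : (v, true) ∈ U <;> simp_all [switchingSet]
  · rintro ⟨θ, -, rfl⟩
    ext ⟨v, b⟩
    cases b <;> simp [switchingSet, eta]

theorem grembanSymPartition_iff {U₁ U₂ : Set (V × Bool)} :
    GrembanSymPartition U₁ U₂ ↔
      U₁.Nonempty ∧ U₁ᶜ.Nonempty ∧ U₂ = U₁ᶜ ∧ (eta ⁻¹' U₁ = U₁ ∨ eta ⁻¹' U₁ = U₁ᶜ) := by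
  simp only [GrembanSymPartition, image_eta]
  constructor
  · rintro ⟨h₁, h₂, hdisj, hcover, hsym⟩
    obtain rfl : U₁ᶜ = U₂ := IsCompl.compl_eq ⟨hdisj, codisjoint_iff.2 hcover⟩
    exact ⟨h₁, h₂, rfl, hsym.imp And.left And.left⟩
  · rintro ⟨h₁, h₂, rfl, hsym⟩
    refine ⟨h₁, h₂, disjoint_compl_right, Set.union_compl_self U₁, ?_⟩
    rcases hsym with h | h
    · exact Or.inl ⟨h, by rw [Set.preimage_compl, h]⟩
    · exact Or.inr ⟨h, by rw [Set.preimage_compl, h, compl_compl]⟩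

theorem gremban_adj_eta {x y : V × Bool} :
    S.gremban.Adj (eta x) (eta y) ↔ S.gremban.Adj x y := by
  simp [gremban, eta]

theorem gremban_lift_eq_or_eq_not {u v : V} {a b c d : Bool}
    (hab : S.gremban.Adj (u, a) (v, b)) (hcd : S.gremban.Adj (u, c) (v, d)) :
    (c = a ∧ d = b) ∨ (c = !a ∧ d = !b) := by
  have h : (a = b) ↔ (c = d) := hab.2.trans hcd.2.symm
  revert h
  cases a <;> cases b <;> cases c <;> cases d <;> simp

theorem map_eta_ne {e : Sym2 (V × Bool)} (he : e ∈ S.gremban.edgeSet) : e.map eta ≠ e := by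
  induction e using Sym2.ind with | h x y => ?_
  have hne : x.1 ≠ y.1 := he.1.ne
  simp only [Sym2.map_mk, ne_eq, Sym2.eq_iff, not_or, not_and]
  exact ⟨fun h => absurd h (by simp [eta, Prod.ext_iff]),
    fun h => absurd (congrArg Prod.fst h) hne⟩

theorem eq_or_eq_map_eta_of_map_fst_eq {e e' : Sym2 (V × Bool)} (he : e ∈ S.gremban.edgeSet)
    (he' : e' ∈ S.gremban.edgeSet) (h : e'.map Prod.fst = e.map Prod.fst) :
    e' = e ∨ e' = e.map eta := by
  induction e using Sym2.ind with | h x y => ?_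
  induction e' using Sym2.ind with | h z w => ?_
  obtain ⟨u, a⟩ := x
  obtain ⟨v, b⟩ := y
  obtain ⟨p, c⟩ := z
  obtain ⟨q, d⟩ := w
  simp only [Sym2.map_mk, Sym2.eq_iff] at h
  rcases h with ⟨rfl, rfl⟩ | ⟨rfl, rfl⟩
  · rcases gremban_lift_eq_or_eq_not he he' with ⟨rfl, rfl⟩ | ⟨rfl, rfl⟩ <;> simp [eta]
  · rcases gremban_lift_eq_or_eq_not he he'.symm with ⟨rfl, rfl⟩ | ⟨rfl, rfl⟩ <;>
      simp [eta, Sym2.eq_swap]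

theorem map_eta_mem_cutEdges {U : Set (V × Bool)} (hU : eta ⁻¹' U = U ∨ eta ⁻¹' U = Uᶜ)
    {e : Sym2 (V × Bool)} (he : e ∈ cutEdges S.gremban U Uᶜ) :
    e.map eta ∈ cutEdges S.gremban U Uᶜ := by
  obtain ⟨hadj, x, y, rfl, hx, hy⟩ := he
  refine ⟨gremban_adj_eta.2 hadj, ?_⟩
  rcases hU with hU | hU
  · exact ⟨eta x, eta y, Sym2.map_mk _ _ _, (Set.ext_iff.1 hU x).2 hx,
      fun h => hy ((Set.ext_iff.1 hU y).1 h)⟩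
  · exact ⟨eta y, eta x, by simp [Sym2.eq_swap], (Set.ext_iff.1 hU y).2 hy,
      fun h => (Set.ext_iff.1 hU x).1 h hx⟩

theorem ncard_cutEdges_gremban [Finite V] {U : Set (V × Bool)}
    (hU : eta ⁻¹' U = U ∨ eta ⁻¹' U = Uᶜ) :
    (cutEdges S.gremban U Uᶜ).ncard =
      2 * (Sym2.map Prod.fst '' cutEdges S.gremban U Uᶜ).ncard :=
  Set.ncard_eq_two_mul_ncard_image (Set.toFinite _) _ _ (fun _ he => map_eta_mem_cutEdges hU he)
    (fun _ he => map_eta_ne he.1) (fun e _ => by rw [Sym2.map_map]; rfl)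
    (fun _ he _ he' h => eq_or_eq_map_eta_of_map_fst_eq he.1 he'.1 h)

theorem image_cutEdges_gremban_preimage (A : Set V) :
    Sym2.map Prod.fst '' cutEdges S.gremban (Prod.fst ⁻¹' A) (Prod.fst ⁻¹' A)ᶜ =
      cutEdges S.G A Aᶜ := by
  ext e
  constructor
  · rintro ⟨_, ⟨hadj, x, y, rfl, hx, hy⟩, rfl⟩
    exact ⟨hadj.1, x.1, y.1, Sym2.map_mk _ _ _, hx, hy⟩
  · rintro ⟨hadj, u, v, rfl, hu, hv⟩
    refine ⟨s((u, true), (v, decide (S.sign u v = 1))), ⟨⟨hadj, ?_⟩, _, _, rfl, hu, hv⟩, rfl⟩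
    simp [eq_comm]

theorem image_cutEdges_gremban_switchingSet {θ : V → ℤ} (hθ : ∀ v, θ v = 1 ∨ θ v = -1) :
    Sym2.map Prod.fst '' cutEdges S.gremban (switchingSet θ) (switchingSet θ)ᶜ =
      frustEdges S θ := by
  ext e
  constructor
  · rintro ⟨_, ⟨hadj, ⟨u, a⟩, ⟨v, b⟩, rfl, hx, hy⟩, rfl⟩
    refine ⟨hadj.1, u, v, Sym2.map_mk _ _ _, ?_⟩
    have hsign : (a = b) ↔ S.sign u v = 1 := hadj.2
    rw [Int.mul_mul_eq_neg_one_iff (hθ u) (hθ v) (S.sign_pm u v hadj.1), ne_eq, ← hsign]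
    simp only [switchingSet, Set.mem_compl_iff, Set.mem_ofPred_eq] at hx hy
    cases a <;> cases b <;> by_cases θ u = 1 <;> by_cases θ v = 1 <;> simp_all
  · rintro ⟨hadj, u, v, rfl, hfrust⟩
    rw [Int.mul_mul_eq_neg_one_iff (hθ u) (hθ v) (S.sign_pm u v hadj)] at hfrust
    refine ⟨s((u, decide (θ u = 1)), (v, !decide (θ v = 1))),
      ⟨⟨hadj, ?_⟩, _, _, rfl, by simp [switchingSet], by simp [switchingSet]⟩, rfl⟩
    show (decide (θ u = 1) = !decide (θ v = 1)) ↔ S.sign u v = 1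
    by_cases θ u = 1 <;> by_cases θ v = 1 <;> simp_all

theorem ncard_cutEdges_gremban_preimage [Finite V] (A : Set V) :
    (cutEdges S.gremban (Prod.fst ⁻¹' A) (Prod.fst ⁻¹' A)ᶜ).ncard =
      2 * (cutEdges S.G A Aᶜ).ncard := by
  rw [ncard_cutEdges_gremban (Or.inl (preimage_eta_eq_self_iff.2 ⟨A, rfl⟩)),
    image_cutEdges_gremban_preimage]

theorem ncard_cutEdges_gremban_switchingSet [Finite V] {θ : V → ℤ}
    (hθ : ∀ v, θ v = 1 ∨ θ v = -1) :
    (cutEdges S.gremban (switchingSet θ) (switchingSet θ)ᶜ).ncard =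
      2 * (frustEdges S θ).ncard := by
  rw [ncard_cutEdges_gremban (Or.inr (preimage_eta_eq_compl_iff.2 ⟨θ, hθ, rfl⟩)),
    image_cutEdges_gremban_switchingSet hθ]

theorem ncard_image_symCutSets [Finite V] [Nonempty V] :
    Set.ncard '' symCutSets S = (2 * ·) '' (cutSizes S.G ∪ frustSizes S) := by
  ext n
  constructor
  · rintro ⟨_, ⟨U, _, hU, rfl⟩, rfl⟩
    obtain ⟨⟨x, hx⟩, ⟨y, hy⟩, rfl, hsym⟩ := grembanSymPartition_iff.1 hU
    rcases hsym with hsym | hsym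
    · obtain ⟨A, rfl⟩ := preimage_eta_eq_self_iff.1 hsym
      exact ⟨_, Or.inl ⟨A, ⟨x.1, hx⟩, ⟨y.1, hy⟩, rfl⟩, (ncard_cutEdges_gremban_preimage A).symm⟩
    · obtain ⟨θ, hθ, rfl⟩ := preimage_eta_eq_compl_iff.1 hsym
      exact ⟨_, Or.inr ⟨θ, hθ, rfl⟩, (ncard_cutEdges_gremban_switchingSet hθ).symm⟩
  · rintro ⟨_, ⟨A, ⟨u, hu⟩, ⟨v, hv⟩, rfl⟩ | ⟨θ, hθ, rfl⟩, rfl⟩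
    · refine ⟨_, ⟨_, _, grembanSymPartition_iff.2 ⟨⟨(u, true), hu⟩, ⟨(v, true), hv⟩, rfl,
        Or.inl (preimage_eta_eq_self_iff.2 ⟨A, rfl⟩)⟩, rfl⟩, ncard_cutEdges_gremban_preimage A⟩
    · obtain ⟨v⟩ := ‹Nonempty V›
      refine ⟨_, ⟨_, _, grembanSymPartition_iff.2
        ⟨⟨(v, decide (θ v = 1)), by simp [switchingSet]⟩,
          ⟨(v, !decide (θ v = 1)), by simp [switchingSet]⟩, rfl,
          Or.inr (preimage_eta_eq_compl_iff.2 ⟨θ, hθ, rfl⟩)⟩, rfl⟩,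
        ncard_cutEdges_gremban_switchingSet hθ⟩

theorem frustSizes_nonempty : (frustSizes S).Nonempty :=
  ⟨_, fun _ => 1, fun _ => Or.inl rfl, rfl⟩

theorem sInf_cutSizes_union_frustSizes :
    sInf (cutSizes S.G ∪ frustSizes S) = min (edgeConn S.G) (frustIndex S) := by
  change _ = min (sInf (cutSizes S.G)) (sInf (frustSizes S))
  rcases subsingleton_or_nontrivial V with hV | hV
  · have hcut : cutSizes S.G = ∅ := Set.eq_empty_of_forall_notMem
      fun _ ⟨_, ⟨u, hu⟩, ⟨v, hv⟩, _⟩ => hv (Subsingleton.elim u v ▸ hu)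
    have hnoedge : frustEdges S (fun _ => 1) = ∅ := Set.eq_empty_of_forall_notMem
      fun _ ⟨hadj, u, v, he, _⟩ => (S.G.mem_edgeSet.1 (he ▸ hadj)).ne (Subsingleton.elim u v)
    have hfrust : 0 ∈ frustSizes S :=
      ⟨fun _ => 1, fun _ => Or.inl rfl, by rw [hnoedge, Set.ncard_empty]⟩
    rw [hcut, Set.empty_union, Nat.sInf_empty, Nat.sInf_eq_zero.2 (Or.inl hfrust), min_self]
  · obtain ⟨u, v, huv⟩ := exists_pair_ne V
    have hcut : (cutSizes S.G).Nonempty := ⟨_, {u}, ⟨u, rfl⟩, ⟨v, huv.symm⟩, rfl⟩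
    exact csInf_union (OrderBot.bddBelow _) hcut (OrderBot.bddBelow _) frustSizes_nonempty

end SignedGraph

/-- For a connected signed graph `G`, the symmetric edge connectivity of its Gremban
expansion equals twice the minimum of the edge connectivity and the frustration index
of `G`. -/
theorem symEdgeConn_eq {V : Type*} [Fintype V] (S : SignedGraph V)
    (hconn : S.G.Connected) :
    symEdgeConn S = 2 * min (edgeConn S.G) (frustIndex S) := by
  have : Nonempty V := hconn.nonempty
  have hmono : Monotone (2 * · : ℕ → ℕ) := fun _ _ h => Nat.mul_le_mul_left 2 h
  change sInf (Set.ncard '' symCutSets S) = _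
  rw [ncard_image_symCutSets, ← hmono.map_csInf frustSizes_nonempty.inr,
    sInf_cutSizes_union_frustSizes]
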